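/- arXiv:2206.05509 — 2 statements merged into one kernel-verified Lean document; each statement's English description precedes it below -/
import Mathlib

section
/- Let X be a set with two binary relations R and R'. Define, for subsets of X, U ≺ V iff R[U] ⊆ V and ◇U = R'⁻¹[U]. Then the following are equivalent: (1) for all subsets A, B ⊆ X, A ≺ B implies ◇A ≺ ◇B; (2) for all w ∈ X, R[R'⁻¹[{w}]] ⊆ R'⁻¹[R[{w}]], i.e., for all u, v, w with R' v w and R v u there exists t with R w t and R' u t. -/
/-- proximity preservation of the diamond `◇U = R'⁻¹[U]` with respect to the
subordination `U ≺ V ↔ R[U] ⊆ V` corresponds to the interaction condition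
`∀ w, R[R'⁻¹[{w}]] ⊆ R'⁻¹[R[{w}]]`. -/
theorem proximity_preserving_correspondence {X : Type*} (R R' : X → X → Prop) :
    (∀ A B : Set X,
        {y | ∃ x ∈ A, R x y} ⊆ B →
        {y | ∃ x ∈ {x | ∃ y, R' x y ∧ y ∈ A}, R x y} ⊆ {x | ∃ y, R' x y ∧ y ∈ B}) ↔
    (∀ u v w : X, R' v w → R v u → ∃ t : X, R w t ∧ R' u t) := by
  constructor
  · -- the least `B` with `{w} ≺ B` is `R[{w}]`
    intro preserves u v w hvw hvu
    have hsub : {y | ∃ x ∈ ({w} : Set X), R x y} ⊆ {t | R w t} := by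
      rintro y ⟨x, rfl, hxy⟩
      exact hxy
    obtain ⟨t, hut, hwt⟩ := preserves {w} {t | R w t} hsub ⟨v, ⟨w, hvw, rfl⟩, hvu⟩
    exact ⟨t, hwt, hut⟩
  · rintro interaction A B hAB u ⟨v, ⟨w, hvw, hwA⟩, hvu⟩
    obtain ⟨t, hwt, hut⟩ := interaction u v w hvw hvu
    exact ⟨t, hut, hAB ⟨w, hwA, hwt⟩⟩
end

section
/- Let f : A → B be an order-preserving map between Boolean algebras where A embeds densely and compactly into a complete Boolean algebra A^δ (the canonical extension) and similarly for B. If f preserves finite joins (f(⊥) = ⊥ and f(a ⊔ b) = f(a) ⊔ f(b)), then its σ-extension f^σ(u) = ⨆{⨅{f(a) : x ≤ a ∈ A} : u ≥ x closed} preserves finite joins on A^δ: f^σ(⊥) = ⊥ and f^σ(u ⊔ v) = f^σ(u) ⊔ f^σ(v) for all closed elements u, v of A^δ. -/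
/-!
On a closed element `x` the σ-extension is given by the meet formula
`f^σ(x) = ⨅ {f a | x ≤ a}`, because any closed `x' ≤ x` only enlarges this meet.
For closed `u`, `v` and `a ≥ u`, `b ≥ v` we have `u ⊔ v ≤ a ⊔ b`, hence
`f^σ(u ⊔ v) ≤ f a ⊔ f b`; taking meets over `a` and `b` and using that a complete
Boolean algebra is a coframe gives `f^σ(u ⊔ v) ≤ f^σ(u) ⊔ f^σ(v)`. The reverse
inequality is monotonicity, and `f^σ(⊥) ≤ f ⊥ = ⊥`.
-/

/-- An element of the canonical extension is closed if it is a meet of elements of `A`. -/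
def IsClosedElt {A Aδ : Type*} [CompleteBooleanAlgebra Aδ] (eA : A → Aδ) (x : Aδ) : Prop :=
  ∃ S : Set A, x = ⨅ a ∈ S, eA a

/-- An element of the canonical extension is open if it is a join of elements of `A`. -/
def IsOpenElt {A Aδ : Type*} [CompleteBooleanAlgebra Aδ] (eA : A → Aδ) (x : Aδ) : Prop :=
  ∃ S : Set A, x = ⨆ a ∈ S, eA a

/-- The σ-extension of a map `f : A → B` to the canonical extensions. -/
noncomputable def sigmaExt {A B Aδ Bδ : Type*}
    [CompleteBooleanAlgebra Aδ] [CompleteBooleanAlgebra Bδ]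
    (eA : A → Aδ) (eB : B → Bδ) (f : A → B) (u : Aδ) : Bδ :=
  ⨆ x ∈ {x : Aδ | IsClosedElt eA x ∧ x ≤ u}, ⨅ a ∈ {a : A | x ≤ eA a}, eB (f a)

noncomputable def meetExt {A B Aδ Bδ : Type*} [LE Aδ] [CompleteLattice Bδ]
    (eA : A → Aδ) (eB : B → Bδ) (f : A → B) (x : Aδ) : Bδ :=
  ⨅ a ∈ {a : A | x ≤ eA a}, eB (f a)

section MeetExt

variable {A B Aδ Bδ : Type*} (eA : A → Aδ) (eB : B → Bδ) (f : A → B)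

theorem meetExt_le [LE Aδ] [CompleteLattice Bδ] {x : Aδ} {a : A} (h : x ≤ eA a) :
    meetExt eA eB f x ≤ eB (f a) :=
  iInf₂_le a h

theorem meetExt_mono [Preorder Aδ] [CompleteLattice Bδ] : Monotone (meetExt eA eB f) :=
  fun _ _ hxy => le_iInf₂ fun _ ha => meetExt_le eA eB f (hxy.trans ha)

theorem meetExt_sup_le [Max A] [Max B] [SemilatticeSup Aδ] [Order.Coframe Bδ]
    (heA_sup : ∀ a b : A, eA (a ⊔ b) = eA a ⊔ eA b)
    (heB_sup : ∀ a b : B, eB (a ⊔ b) = eB a ⊔ eB b)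
    (hf_sup : ∀ a b : A, f (a ⊔ b) = f a ⊔ f b) (u v : Aδ) :
    meetExt eA eB f (u ⊔ v) ≤ meetExt eA eB f u ⊔ meetExt eA eB f v := by
  have h_pairs : meetExt eA eB f (u ⊔ v) ≤
      ⨅ a ∈ {a : A | u ≤ eA a}, ⨅ b ∈ {b : A | v ≤ eA b}, (eB (f a) ⊔ eB (f b)) := by
    refine le_iInf₂ fun a ha => le_iInf₂ fun b hb => ?_
    have hab : u ⊔ v ≤ eA (a ⊔ b) := heA_sup a b ▸ sup_le_sup ha hb
    simpa only [hf_sup, heB_sup] using meetExt_le eA eB f hab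
  have h_distrib : meetExt eA eB f u ⊔ meetExt eA eB f v =
      ⨅ a ∈ {a : A | u ≤ eA a}, ⨅ b ∈ {b : A | v ≤ eA b}, (eB (f a) ⊔ eB (f b)) := by
    simp only [meetExt, iInf_sup_eq, sup_iInf_eq]
    exact iInf₂_comm _
  exact h_distrib ▸ h_pairs

end MeetExt

section SigmaExt

variable {A B Aδ Bδ : Type*} [CompleteBooleanAlgebra Aδ] [CompleteBooleanAlgebra Bδ]
  (eA : A → Aδ) (eB : B → Bδ) (f : A → B)

theorem sigmaExt_le_meetExt (u : Aδ) : sigmaExt eA eB f u ≤ meetExt eA eB f u :=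
  iSup₂_le fun _ hx => meetExt_mono eA eB f hx.2

theorem meetExt_le_sigmaExt {x u : Aδ} (hx : IsClosedElt eA x) (hxu : x ≤ u) :
    meetExt eA eB f x ≤ sigmaExt eA eB f u :=
  le_iSup₂ (f := fun x _ => meetExt eA eB f x) x ⟨hx, hxu⟩

theorem sigmaExt_eq_meetExt {u : Aδ} (hu : IsClosedElt eA u) :
    sigmaExt eA eB f u = meetExt eA eB f u :=
  (sigmaExt_le_meetExt eA eB f u).antisymm (meetExt_le_sigmaExt eA eB f hu le_rfl)

theorem sigmaExt_mono : Monotone (sigmaExt eA eB f) :=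
  fun _ _ huv => iSup₂_le fun _ hx => meetExt_le_sigmaExt eA eB f hx.1 (hx.2.trans huv)

theorem sigmaExt_le {u : Aδ} {a : A} (h : u ≤ eA a) : sigmaExt eA eB f u ≤ eB (f a) :=
  (sigmaExt_le_meetExt eA eB f u).trans (meetExt_le eA eB f h)

theorem sigmaExt_sup_of_isClosedElt [Max A] [Max B]
    (heA_sup : ∀ a b : A, eA (a ⊔ b) = eA a ⊔ eA b)
    (heB_sup : ∀ a b : B, eB (a ⊔ b) = eB a ⊔ eB b)
    (hf_sup : ∀ a b : A, f (a ⊔ b) = f a ⊔ f b)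
    {u v : Aδ} (hu : IsClosedElt eA u) (hv : IsClosedElt eA v) :
    sigmaExt eA eB f (u ⊔ v) = sigmaExt eA eB f u ⊔ sigmaExt eA eB f v := by
  refine le_antisymm ?_ (sup_le (sigmaExt_mono eA eB f le_sup_left)
    (sigmaExt_mono eA eB f le_sup_right))
  calc sigmaExt eA eB f (u ⊔ v) ≤ meetExt eA eB f (u ⊔ v) := sigmaExt_le_meetExt eA eB f _
    _ ≤ meetExt eA eB f u ⊔ meetExt eA eB f v := meetExt_sup_le eA eB f heA_sup heB_sup hf_sup u v
    _ = sigmaExt eA eB f u ⊔ sigmaExt eA eB f v := by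
      rw [sigmaExt_eq_meetExt eA eB f hu, sigmaExt_eq_meetExt eA eB f hv]

end SigmaExt

theorem sigma_extension_preserves_finite_joins_general
    {A B Aδ Bδ : Type*} [BooleanAlgebra A] [BooleanAlgebra B]
    [CompleteBooleanAlgebra Aδ] [CompleteBooleanAlgebra Bδ]
    (eA : A → Aδ) (eB : B → Bδ)
    -- the embeddings are Boolean algebra embeddings
    (heA_sup : ∀ a b : A, eA (a ⊔ b) = eA a ⊔ eA b)
    (heB_bot : eB ⊥ = ⊥)
    (heB_sup : ∀ a b : B, eB (a ⊔ b) = eB a ⊔ eB b)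
    -- the map f
    (f : A → B)
    (hf_bot : f ⊥ = ⊥)
    (hf_sup : ∀ a b : A, f (a ⊔ b) = f a ⊔ f b) :
    sigmaExt eA eB f ⊥ = ⊥ ∧
    ∀ u v : Aδ, IsClosedElt eA u → IsClosedElt eA v →
      sigmaExt eA eB f (u ⊔ v) = sigmaExt eA eB f u ⊔ sigmaExt eA eB f v := by
  refine ⟨le_bot_iff.mp ?_, fun u v hu hv =>
    sigmaExt_sup_of_isClosedElt eA eB f heA_sup heB_sup hf_sup hu hv⟩
  simpa only [hf_bot, heB_bot] using sigmaExt_le eA eB f (bot_le : (⊥ : Aδ) ≤ eA ⊥)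

/-- the σ-extension of a finite-join-preserving order-preserving map
between Boolean algebras preserves finite joins of closed elements of the canonical
extension (and `⊥`). -/
theorem sigma_extension_preserves_finite_joins
    {A B Aδ Bδ : Type*} [BooleanAlgebra A] [BooleanAlgebra B]
    [CompleteBooleanAlgebra Aδ] [CompleteBooleanAlgebra Bδ]
    (eA : A → Aδ) (eB : B → Bδ)
    -- the embeddings are Boolean algebra embeddings
    (heA_le : ∀ a b : A, a ≤ b ↔ eA a ≤ eA b)
    (heA_bot : eA ⊥ = ⊥) (heA_top : eA ⊤ = ⊤)
    (heA_inf : ∀ a b : A, eA (a ⊓ b) = eA a ⊓ eA b)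
    (heA_sup : ∀ a b : A, eA (a ⊔ b) = eA a ⊔ eA b)
    (heB_le : ∀ a b : B, a ≤ b ↔ eB a ≤ eB b)
    (heB_bot : eB ⊥ = ⊥) (heB_top : eB ⊤ = ⊤)
    (heB_inf : ∀ a b : B, eB (a ⊓ b) = eB a ⊓ eB b)
    (heB_sup : ∀ a b : B, eB (a ⊔ b) = eB a ⊔ eB b)
    -- denseness
    (hA_dense : ∀ u : Aδ,
      u = ⨆ x ∈ {x : Aδ | IsClosedElt eA x ∧ x ≤ u}, x ∧
      u = ⨅ y ∈ {y : Aδ | IsOpenElt eA y ∧ u ≤ y}, y)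
    (hB_dense : ∀ u : Bδ,
      u = ⨆ x ∈ {x : Bδ | IsClosedElt eB x ∧ x ≤ u}, x ∧
      u = ⨅ y ∈ {y : Bδ | IsOpenElt eB y ∧ u ≤ y}, y)
    -- compactness
    (hA_cpt : ∀ S T : Set A, (⨅ a ∈ S, eA a) ≤ (⨆ b ∈ T, eA b) →
      ∃ S₀ T₀ : Finset A, ↑S₀ ⊆ S ∧ ↑T₀ ⊆ T ∧
        (⨅ a ∈ S₀, eA a) ≤ (⨆ b ∈ T₀, eA b))
    (hB_cpt : ∀ S T : Set B, (⨅ a ∈ S, eB a) ≤ (⨆ b ∈ T, eB b) →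
      ∃ S₀ T₀ : Finset B, ↑S₀ ⊆ S ∧ ↑T₀ ⊆ T ∧
        (⨅ a ∈ S₀, eB a) ≤ (⨆ b ∈ T₀, eB b))
    -- the map f
    (f : A → B)
    (hf_mono : ∀ a b : A, a ≤ b → f a ≤ f b)
    (hf_bot : f ⊥ = ⊥)
    (hf_sup : ∀ a b : A, f (a ⊔ b) = f a ⊔ f b) :
    sigmaExt eA eB f ⊥ = ⊥ ∧
    ∀ u v : Aδ, IsClosedElt eA u → IsClosedElt eA v →
      sigmaExt eA eB f (u ⊔ v) = sigmaExt eA eB f u ⊔ sigmaExt eA eB f v :=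
  sigma_extension_preserves_finite_joins_general eA eB heA_sup heB_bot heB_sup f hf_bot hf_sup
end
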